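/- arXiv:2201.08913 — 4 statements merged into one kernel-verified Lean document; each statement's English description precedes it below -/
import Mathlib

section
/- For any prime p, any n ≥ 1, and the polynomial C_{p^n}(x,y) = ((x+y)^{p^n} - x^{p^n} - y^{p^n})/p with integer coefficients, one has C_{p^n}(x,y) ≡ C_p(x^{p^{n-1}}, y^{p^{n-1}}) modulo p, as polynomials in ℤ[x,y]. -/
open MvPolynomial

/-!
Put `m = n - 1`, `a = (x + y) ^ p ^ m` and `b = x ^ p ^ m + y ^ p ^ m`. Then
`p • (C_{p^n} - C_p(x ^ p ^ m, y ^ p ^ m)) = a ^ p - b ^ p`. Since `p ∣ a - b`, the binomial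
expansion of `a ^ p = (b + (a - b)) ^ p` gives `p ^ 2 ∣ a ^ p - b ^ p`, and cancelling one `p`
in the domain `ℤ[x, y]` leaves `p ∣ C_{p^n} - C_p(x ^ p ^ m, y ^ p ^ m)`.
-/

theorem prime_dvd_add_pow_prime_pow_sub {R : Type*} [CommRing R] {p : ℕ} (hp : p.Prime)
    (x y : R) (m : ℕ) : (p : R) ∣ (x + y) ^ p ^ m - (x ^ p ^ m + y ^ p ^ m) := by
  obtain ⟨r, hr⟩ := exists_add_pow_prime_pow_eq hp x y m
  exact ⟨x * y * r, by rw [hr]; ring⟩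

theorem sq_prime_dvd_add_pow_prime_pow_succ_sub {R : Type*} [CommRing R] {p : ℕ}
    (hp : p.Prime) (x y : R) (m : ℕ) :
    (p : R) ^ 2 ∣ (x + y) ^ p ^ (m + 1) - (x ^ p ^ m + y ^ p ^ m) ^ p := by
  simpa [pow_succ, pow_mul] using dvd_sub_pow_of_dvd_sub (prime_dvd_add_pow_prime_pow_sub hp x y m) 1

theorem MvPolynomial.map_intCastRingHom_zmod_eq_of_sq_dvd_smul_sub {σ : Type*} {p : ℕ}
    (hp : p ≠ 0) {A B : MvPolynomial σ ℤ}
    (h : (p : MvPolynomial σ ℤ) ^ 2 ∣ (p : ℤ) • A - (p : ℤ) • B) :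
    map (Int.castRingHom (ZMod p)) A = map (Int.castRingHom (ZMod p)) B := by
  have hp' : (p : MvPolynomial σ ℤ) ≠ 0 := by exact_mod_cast hp
  rw [← smul_sub, zsmul_eq_mul, Int.cast_natCast, sq] at h
  rw [← sub_eq_zero, ← map_sub, ← C_dvd_iff_zmod, C_eq_coe_nat]
  exact (mul_dvd_mul_iff_left hp').mp h

/-- For a prime `p` and `n ≥ 1`, with `C_{p^m}(x,y) = ((x+y)^{p^m} - x^{p^m} - y^{p^m})/p`
(characterized by `p • Q = (x+y)^{p^m} - x^{p^m} - y^{p^m}` in `ℤ[x,y]`), one has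
`C_{p^n}(x,y) ≡ C_p(x^{p^{n-1}}, y^{p^{n-1}})` modulo `p`. -/
theorem stmt_2 (p n : ℕ) (hp : p.Prime) (hn : 1 ≤ n)
    (Qn Q1 : MvPolynomial (Fin 2) ℤ)
    (hQn : (p : ℤ) • Qn =
      (X 0 + X 1) ^ p ^ n - (X 0 : MvPolynomial (Fin 2) ℤ) ^ p ^ n - X 1 ^ p ^ n)
    (hQ1 : (p : ℤ) • Q1 =
      (X 0 + X 1) ^ p - (X 0 : MvPolynomial (Fin 2) ℤ) ^ p - X 1 ^ p) :
    MvPolynomial.map (Int.castRingHom (ZMod p)) Qn =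
      MvPolynomial.map (Int.castRingHom (ZMod p))
        (MvPolynomial.bind₁ (fun i : Fin 2 => (X i : MvPolynomial (Fin 2) ℤ) ^ p ^ (n - 1)) Q1) := by
  obtain ⟨m, rfl⟩ : ∃ m, n = m + 1 := ⟨n - 1, by omega⟩
  rw [Nat.add_sub_cancel]
  have hbind : (p : ℤ) • bind₁ (fun i : Fin 2 => (X i : MvPolynomial (Fin 2) ℤ) ^ p ^ m) Q1 =
      (X 0 ^ p ^ m + X 1 ^ p ^ m) ^ p - X 0 ^ p ^ (m + 1) - X 1 ^ p ^ (m + 1) := by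
    rw [← map_zsmul, hQ1]
    simp only [map_sub, map_add, map_pow, bind₁_X_right, ← pow_mul, pow_succ]
  apply map_intCastRingHom_zmod_eq_of_sq_dvd_smul_sub hp.ne_zero
  rw [hQn, hbind]
  convert sq_prime_dvd_add_pow_prime_pow_succ_sub hp (X 0 : MvPolynomial (Fin 2) ℤ) (X 1) m
    using 1
  ring
end

section
/- Let f(x) = x + a x^{p^{h-1}} + b x^{p^h} (mod x^{p^{h+1}}) be a power series over a commutative Q-algebra, with h > 2. Then its compositional inverse g satisfies, modulo x^{p^h + 1}: g(x) = x + Σ_{j=0}^{p-1} ((-1)^{j+1}/(j+1)) · C(p^{h-1}(j+1), j) · a^{j+1} · x^{j(p^{h-1}-1) + p^{h-1}} - b x^{p^h}. -/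
open PowerSeries

/-- Composition `g ∘ f` of power series, valid when `f` has zero constant term:
the coefficient of `x^k` in `g(f(x))` is `Σ_{n ≤ k} (coeff n g) · coeff k (f^n)`. -/
noncomputable def psComp {R : Type*} [CommRing R] (g f : PowerSeries R) : PowerSeries R :=
  PowerSeries.mk fun k =>
    ∑ n ∈ Finset.range (k + 1), PowerSeries.coeff (R := R) n g * PowerSeries.coeff (R := R) k (f ^ n)

/-!
Write `f ≡ X u` with `u(0) = 1` and `v = u⁻¹`. Lagrange inversion `k g_k = [X^{k-1}] v^k`
comes from the residue argument: `K v^{K+1} (X u)' = K v^K - X (v^K)'`, so the `X^K`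
coefficient of `v^{K+1} (X u)'` vanishes for `K ≥ 1`, and expanding `X = Σ g_m (X u)^m`
against `v^{k+1} (X u)'` isolates `g_k`.

Here `u ≡ 1 + a X^s + b X^r` with `s = p^{h-1} - 1` and `r = p^h - 1`. Below degree `r + 1` the
`b`-term enters `v^k` only linearly, as `-k b X^r`, and `(1 + a X^s)^{-k}` is a negative binomial
series in `X^s`. Since `h > 2`, `s (p + 1) > r`, so only the terms `a^{j+1}` with `j < p` survive.
-/

theorem isUnit_natCast_of_ne_zero {R : Type*} [CommRing R] [Algebra ℚ R] {n : ℕ}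
    (hn : n ≠ 0) : IsUnit (n : R) := by
  simpa using (Ne.isUnit (Nat.cast_ne_zero.2 hn : (n : ℚ) ≠ 0)).map (algebraMap ℚ R)

theorem ite_dvd_eq_sum_range {M : Type*} [AddCommMonoid M] {s N : ℕ} (m : ℕ) (hN : N < s * m)
    (F : ℕ → M) :
    (if s ∣ N then F (N / s) else 0) =
      ∑ i ∈ Finset.range m, if N = s * i then F i else 0 := by
  have hs : 0 < s := Nat.pos_of_ne_zero (by rintro rfl; simp at hN)
  split_ifs with h
  · obtain ⟨i, rfl⟩ := h
    simp_rw [Nat.mul_left_cancel_iff hs, Finset.sum_ite_eq, Nat.mul_div_cancel_left i hs]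
    rw [if_pos (Finset.mem_range.2 (Nat.lt_of_mul_lt_mul_left hN))]
  · exact (Finset.sum_eq_zero fun i _ => if_neg fun hi => h ⟨i, hi⟩).symm

theorem cast_choose_eq_div_mul_cast_choose (n j : ℕ) :
    ((n + 1 + j).choose n : ℚ) = (n + 1) / (j + 1) * (n + 1 + j).choose j := by
  have h := Nat.choose_succ_right_eq (n + 1 + j) j
  rw [show n + 1 + j - j = n + 1 by omega] at h
  have h' : ((n + 1 + j).choose (j + 1) : ℚ) * (j + 1) = (n + 1 + j).choose j * (n + 1) := by
    exact_mod_cast h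
  rw [Nat.choose_symm_of_eq_add (by omega : n + 1 + j = n + (j + 1))]
  field_simp
  linear_combination h'

namespace PowerSeries

variable {R : Type*} [CommRing R]

section Residue

variable {u v : R⟦X⟧}

theorem natCast_mul_pow_succ_mul_derivative (huv : u * v = 1) (K : ℕ) :
    (K : R⟦X⟧) * (v ^ (K + 1) * d⁄dX R (X * u)) =
      (K : R⟦X⟧) * v ^ K - X * d⁄dX R (v ^ K) := by
  have hv : d⁄dX R v = -(v ^ 2 * d⁄dX R u) := by
    have h := congrArg (d⁄dX R) huv
    rw [Derivation.leibniz, derivative_one, smul_eq_mul, smul_eq_mul] at h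
    linear_combination v * h - d⁄dX R v * huv
  rw [derivative_pow, hv, Derivation.leibniz, derivative_X, smul_eq_mul, smul_eq_mul]
  rcases K with _ | K
  · simp
  · simp only [Nat.add_sub_cancel]
    linear_combination (↑(K + 1) * v ^ (K + 1)) * huv

theorem natCast_mul_coeff_pow_succ_mul_derivative (huv : u * v = 1) (K n : ℕ) :
    (K : R) * coeff n (v ^ (K + 1) * d⁄dX R (X * u)) = ((K : R) - n) * coeff n (v ^ K) := by
  have h := congrArg (coeff n) (natCast_mul_pow_succ_mul_derivative huv K)
  rw [← map_natCast (C (R := R)), coeff_C_mul, map_sub, coeff_C_mul] at h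
  rw [h]
  rcases n with _ | n
  · simp
  · rw [coeff_succ_X_mul, coeff_derivative]
    push_cast
    ring

theorem coeff_pow_succ_mul_derivative_eq_zero [Algebra ℚ R] (huv : u * v = 1) {K : ℕ}
    (hK : K ≠ 0) : coeff K (v ^ (K + 1) * d⁄dX R (X * u)) = 0 := by
  refine (isUnit_natCast_of_ne_zero hK).mul_left_cancel ?_
  rw [natCast_mul_coeff_pow_succ_mul_derivative huv, sub_self, zero_mul, mul_zero]

end Residue

theorem coeff_psComp (g f : R⟦X⟧) (k : ℕ) :
    coeff k (psComp g f) = ∑ n ∈ Finset.range (k + 1), coeff n g * coeff k (f ^ n) :=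
  coeff_mk _ _

theorem X_pow_succ_dvd_psComp_sub (g : R⟦X⟧) {f : R⟦X⟧} (hf : constantCoeff f = 0)
    (k : ℕ) :
    X ^ (k + 1) ∣ psComp g f - ∑ m ∈ Finset.range (k + 1), C (coeff m g) * f ^ m := by
  refine X_pow_dvd_iff.2 fun j hj => ?_
  have hvanish : ∀ m, j < m → coeff j (f ^ m) = 0 := fun m hjm =>
    X_pow_dvd_iff.1 (pow_dvd_pow_of_dvd (X_dvd_iff.2 hf) m) j hjm
  rw [map_sub, coeff_psComp, map_sum, sub_eq_zero]
  simp_rw [coeff_C_mul]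
  refine Finset.sum_subset (Finset.range_subset_range.2 (by omega)) fun m _ hm => ?_
  rw [hvanish m (by simpa using hm), mul_zero]

theorem lagrange_inversion [Algebra ℚ R] {f g u v : R⟦X⟧} {N : ℕ} (huv : u * v = 1)
    (hf : X ^ (N + 1) ∣ f - X * u) (hgf : psComp g f = X) {n : ℕ} (hn : n < N) :
    ((n + 1 : ℕ) : R) * coeff (n + 1) g = coeff n (v ^ (n + 1)) := by
  set D := d⁄dX R (X * u)
  set G := ∑ m ∈ Finset.range (n + 2), C (coeff m g) * (X * u) ^ m
  have hf0 : constantCoeff f = 0 := by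
    have hX : X ∣ f - X * u := (dvd_pow_self X N.succ_ne_zero).trans hf
    exact X_dvd_iff.1 (by simpa using hX.add (dvd_mul_right X u))
  have hG : X ^ (n + 2) ∣ X - G := by
    have hsplit : X - G = (psComp g f - ∑ m ∈ Finset.range (n + 2), C (coeff m g) * f ^ m) +
        ∑ m ∈ Finset.range (n + 2), C (coeff m g) * (f ^ m - (X * u) ^ m) := by
      simp only [G, hgf, mul_sub, Finset.sum_sub_distrib]
      ring
    rw [hsplit]
    refine (X_pow_succ_dvd_psComp_sub g hf0 (n + 1)).add (Finset.dvd_sum fun m _ => ?_)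
    exact ((pow_dvd_pow X (by omega)).trans (hf.trans (sub_dvd_pow_sub_pow _ _ m))).mul_left _
  have hGD : G * (v ^ (n + 2) * D) =
      ∑ m ∈ Finset.range (n + 2), C (coeff m g) * (X ^ m * (v ^ (n + 1 - m + 1) * D)) := by
    rw [Finset.sum_mul]
    refine Finset.sum_congr rfl fun m hm => ?_
    have hm : m + (n + 1 - m + 1) = n + 2 := by simp at hm; omega
    rw [← hm, pow_add, mul_pow]
    calc C (coeff m g) * (X ^ m * u ^ m) * (v ^ m * v ^ (n + 1 - m + 1) * D)
        = C (coeff m g) * (X ^ m * ((u * v) ^ m * (v ^ (n + 1 - m + 1) * D))) := by ring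
      _ = _ := by rw [huv, one_pow, one_mul]
  have hleft : coeff (n + 1) (G * (v ^ (n + 2) * D)) = coeff n (v ^ (n + 2) * D) := by
    have h := X_pow_dvd_iff.1 (hG.mul_right (v ^ (n + 2) * D)) (n + 1) (by omega)
    rwa [sub_mul, map_sub, coeff_succ_X_mul, sub_eq_zero, eq_comm] at h
  have hD0 : constantCoeff D = constantCoeff u := by
    rw [← coeff_zero_eq_constantCoeff, coeff_derivative, coeff_succ_X_mul]
    simp
  have hright : coeff (n + 1) (G * (v ^ (n + 2) * D)) = coeff (n + 1) g := by
    rw [hGD, map_sum, Finset.sum_eq_single (n + 1)]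
    · rw [coeff_C_mul, coeff_X_pow_mul', if_pos le_rfl, Nat.sub_self, zero_add, pow_one,
        coeff_zero_eq_constantCoeff, map_mul, hD0, mul_comm (constantCoeff v), ← map_mul, huv,
        map_one, mul_one]
    · intro m hm hne
      rw [Finset.mem_range] at hm
      rw [coeff_C_mul, coeff_X_pow_mul', if_pos (by omega),
        coeff_pow_succ_mul_derivative_eq_zero huv (by omega), mul_zero]
    · simp
  have h := natCast_mul_coeff_pow_succ_mul_derivative huv (n + 1) n
  rw [← hright, hleft, h]
  push_cast
  ring

theorem coeff_pow_of_one_add_C_mul_X_pow_mul_eq_one (a : R) {s : ℕ} (hs : s ≠ 0) {v : R⟦X⟧}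
    (hv : (1 + C a * X ^ s) * v = 1) (d N : ℕ) :
    coeff N (v ^ (d + 1)) = if s ∣ N then (-a) ^ (N / s) * ((d + N / s).choose d : R) else 0 := by
  set ψ := expand s hs (rescale (-a) (mk fun n => ((d + n).choose d : R)))
  have hψ : ψ * (1 + C a * X ^ s) ^ (d + 1) = 1 := by
    have h := congrArg (fun φ => expand s hs (rescale (-a) φ))
      (mk_add_choose_mul_one_sub_pow_eq_one R d)
    simpa [ψ, rescale_X, expand_C] using h
  have hvψ : v ^ (d + 1) = ψ := by
    calc v ^ (d + 1) = ψ * ((1 + C a * X ^ s) * v) ^ (d + 1) := by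
          rw [mul_pow, ← mul_assoc, hψ, one_mul]
      _ = ψ := by rw [hv, one_pow, mul_one]
  rw [hvψ, coeff_expand, coeff_rescale, coeff_mk]

theorem coeff_pow_of_add_C_mul_X_pow_mul_eq_one {u v w : R⟦X⟧} (hu : constantCoeff u = 1)
    (huv : u * v = 1) {c : R} {r : ℕ} (hr : r ≠ 0) (hw : (u + C c * X ^ r) * w = 1) (k : ℕ)
    {N : ℕ} (hN : N ≤ r) :
    coeff N (w ^ k) = coeff N (v ^ k) - if N = r then k * c else 0 := by
  suffices hdvd : X ^ (r + 1) ∣ w ^ k - (v ^ k - C (k * c) * X ^ r) by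
    have h := X_pow_dvd_iff.1 hdvd N (by omega)
    rwa [map_sub, map_sub, coeff_C_mul_X_pow, sub_eq_zero] at h
  have hδ : w - v = -(C c * X ^ r * (v * w)) := by linear_combination v * hw - w * huv
  have hvw : constantCoeff (v ^ k * w) = 1 := by
    have hv0 : constantCoeff v = 1 := by simpa [hu] using congrArg constantCoeff huv
    have hw0 : constantCoeff w = 1 := by simpa [hu, hr] using congrArg constantCoeff hw
    rw [map_mul, map_pow, hv0, hw0, one_pow, one_mul]
  have hsq : X ^ (r + 1) ∣ (w - v) ^ 2 := by
    refine (pow_dvd_pow X (by omega : r + 1 ≤ r * 2)).trans ?_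
    rw [pow_mul, hδ, neg_sq]
    exact pow_dvd_pow_of_dvd ((dvd_mul_left _ _).mul_right _) 2
  have hlin : X ^ (r + 1) ∣ C (k * c) * X ^ r * (v ^ k * w - 1) := by
    rw [pow_succ]
    exact mul_dvd_mul (dvd_mul_left _ _) (X_dvd_iff.2 (by simp [hvw]))
  have hsplit : w ^ k - (v ^ k - C (k * c) * X ^ r) =
      ((v + (w - v)) ^ k - v ^ (k - 1) * (w - v) * (k : R⟦X⟧) - v ^ k) -
        C (k * c) * X ^ r * (v ^ k * w - 1) := by
    rcases k with _ | k
    · simp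
    · rw [add_sub_cancel, Nat.add_sub_cancel, hδ, map_mul, map_natCast]
      ring
  rw [hsplit]
  exact (hsq.trans (sq_dvd_add_pow_sub_sub _ _ k)).sub hlin

theorem natCast_mul_coeff_of_psComp_eq_X [Algebra ℚ R] {f g : R⟦X⟧} (a b : R) {s r : ℕ}
    (hs : s ≠ 0) (hr : r ≠ 0) (hf : X ^ (r + 2) ∣ f - X * (1 + C a * X ^ s + C b * X ^ r))
    (hgf : psComp g f = X) {n : ℕ} (hn : n ≤ r) :
    ((n + 1 : ℕ) : R) * coeff (n + 1) g =
      (if s ∣ n then (-a) ^ (n / s) * ((n + n / s).choose n : R) else 0) -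
        if n = r then ((n + 1 : ℕ) : R) * b else 0 := by
  have hu₁ : constantCoeff (1 + C a * X ^ s) = 1 := by simp [hs]
  have hu : constantCoeff (1 + C a * X ^ s + C b * X ^ r) = 1 := by simp [hs, hr]
  have hv₁ := mul_invOfUnit _ 1 (hu₁.trans Units.val_one.symm)
  have hv := mul_invOfUnit _ 1 (hu.trans Units.val_one.symm)
  rw [lagrange_inversion hv hf hgf (by omega),
    coeff_pow_of_add_C_mul_X_pow_mul_eq_one hu₁ hv₁ hr hv _ hn,
    coeff_pow_of_one_add_C_mul_X_pow_mul_eq_one a hs hv₁]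

section Approx

variable [Algebra ℚ R]

/-- The right-hand side of `stmt_5`, with `q = p ^ (h - 1)`. -/
noncomputable def approxInverse (p q : ℕ) (a b : R) : R⟦X⟧ :=
  X + (∑ j ∈ Finset.range p,
      C (algebraMap ℚ R ((-1 : ℚ) ^ (j + 1) / (j + 1) * ((q * (j + 1)).choose j : ℚ)) *
        a ^ (j + 1)) * X ^ (j * (q - 1) + q)) - C b * X ^ (p * q)

theorem constantCoeff_approxInverse {p q : ℕ} (hp : p ≠ 0) (hq : q ≠ 0) (a b : R) :
    constantCoeff (approxInverse p q a b) = 0 := by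
  simp [approxInverse, hp, hq]

theorem natCast_mul_coeff_approxInverse {p q : ℕ} (hpq : p < q) (a b : R) {n : ℕ}
    (hn : n < p * q) :
    ((n + 1 : ℕ) : R) * coeff (n + 1) (approxInverse p q a b) =
      (if q - 1 ∣ n then (-a) ^ (n / (q - 1)) * ((n + n / (q - 1)).choose n : R) else 0) -
        if n = p * q - 1 then ((n + 1 : ℕ) : R) * b else 0 := by
  obtain ⟨s, rfl⟩ : ∃ s, q = s + 1 := ⟨q - 1, by omega⟩
  have hn' : n < s * (p + 1) := by nlinarith
  rw [Nat.add_sub_cancel,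
    ite_dvd_eq_sum_range (p + 1) hn' fun i => (-a) ^ i * ((n + i).choose n : R),
    Finset.sum_range_succ', approxInverse, map_sub, map_add, map_sum, coeff_X, coeff_C_mul_X_pow,
    mul_sub, mul_add, Finset.mul_sum, add_comm]
  congr 1
  · congr 1
    · refine Finset.sum_congr rfl fun j _ => ?_
      have hexp : j * (s + 1 - 1) + (s + 1) = s * (j + 1) + 1 := by
        rw [Nat.add_sub_cancel]; ring
      rw [coeff_C_mul_X_pow, mul_ite, mul_zero, hexp]
      refine if_ctx_congr Nat.add_right_cancel_iff (fun hj => ?_) fun _ => rfl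
      have hQ : ((n + 1 : ℕ) : ℚ) * ((-1) ^ (j + 1) / (j + 1) * ((s + 1) * (j + 1)).choose j) =
          (-1) ^ (j + 1) * (n + (j + 1)).choose n := by
        rw [show (s + 1) * (j + 1) = n + 1 + j by rw [hj]; ring,
          show n + (j + 1) = n + 1 + j by ring, cast_choose_eq_div_mul_cast_choose]
        push_cast
        ring
      calc ((n + 1 : ℕ) : R) * (algebraMap ℚ R ((-1) ^ (j + 1) / (j + 1) *
            ((s + 1) * (j + 1)).choose j) * a ^ (j + 1))
          = algebraMap ℚ R (((n + 1 : ℕ) : ℚ) * ((-1) ^ (j + 1) / (j + 1) *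
            ((s + 1) * (j + 1)).choose j)) * a ^ (j + 1) := by
            simp only [map_mul, map_natCast]
            ring
        _ = (-a) ^ (j + 1) * ((n + (j + 1)).choose n : R) := by
            rw [hQ, neg_pow]
            simp only [map_mul, map_pow, map_neg, map_one, map_natCast]
            ring
    · by_cases h : n = 0 <;> simp [h]
  · rw [mul_ite, mul_zero]
    exact if_congr (by omega) rfl rfl

end Approx

end PowerSeries

theorem stmt_5_general {R : Type*} [CommRing R] [Algebra ℚ R] (p h : ℕ) (hp : p.Prime)
    (hh : 2 < h) (a b : R) (f g : PowerSeries R)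
    (hf : ∀ k < p ^ (h + 1), PowerSeries.coeff (R := R) k f =
      PowerSeries.coeff (R := R) k (X + C (R := R) a * X ^ p ^ (h - 1) + C (R := R) b * X ^ p ^ h))
    (hg0 : constantCoeff (R := R) g = 0)
    (hgf : psComp g f = X) :
    ∀ k ≤ p ^ h, PowerSeries.coeff (R := R) k g =
      PowerSeries.coeff (R := R) k
        (X + (∑ j ∈ Finset.range p,
            C (R := R) (algebraMap ℚ R ((-1 : ℚ) ^ (j + 1) / (j + 1) *
                ((p ^ (h - 1) * (j + 1)).choose j : ℚ)) * a ^ (j + 1)) *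
              X ^ (j * (p ^ (h - 1) - 1) + p ^ (h - 1)))
          - C (R := R) b * X ^ p ^ h) := by
  set q := p ^ (h - 1)
  have hph : p ^ h = p * q := (mul_pow_sub_one (by omega) p).symm
  have hpq : p < q := by
    simpa using Nat.pow_lt_pow_right hp.one_lt (by omega : 1 < h - 1)
  have hp2 := hp.two_le
  have hpq2 : 2 < p * q := by nlinarith
  have hpqp : p * q + 1 < p * q * p := by nlinarith
  have hfu : X ^ (p * q - 1 + 2) ∣ f - X * (1 + C a * X ^ (q - 1) + C b * X ^ (p * q - 1)) := by
    have hXu : X * (1 + C a * X ^ (q - 1) + C b * X ^ (p * q - 1)) =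
        X + C a * X ^ q + C b * X ^ (p * q) := by
      linear_combination C a * mul_pow_sub_one (by omega : q ≠ 0) (X : R⟦X⟧) +
        C b * mul_pow_sub_one (by omega : p * q ≠ 0) (X : R⟦X⟧)
    refine X_pow_dvd_iff.2 fun m hm => ?_
    rw [map_sub, sub_eq_zero, hXu, hf m (by rw [pow_succ, hph]; omega), hph]
  rw [hph]
  rintro (_ | n) hn
  · rw [coeff_zero_eq_constantCoeff, hg0]
    exact (constantCoeff_approxInverse (by omega) (by omega) a b).symm
  · refine (isUnit_natCast_of_ne_zero n.succ_ne_zero).mul_left_cancel ?_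
    exact (natCast_mul_coeff_of_psComp_eq_X a b (by omega) (by omega) hfu hgf (by omega)).trans
      (natCast_mul_coeff_approxInverse hpq a b (by omega)).symm

/-- Let `f(x) = x + a x^{p^{h-1}} + b x^{p^h}` mod `x^{p^{h+1}}` over a commutative
`ℚ`-algebra, with `h > 2`. Then its compositional inverse `g` satisfies, mod `x^{p^h+1}`:
`g(x) = x + Σ_{j=0}^{p-1} ((-1)^{j+1}/(j+1)) C(p^{h-1}(j+1), j) a^{j+1}
  x^{j(p^{h-1}-1)+p^{h-1}} - b x^{p^h}`. -/
theorem stmt_5 {R : Type*} [CommRing R] [Algebra ℚ R] (p h : ℕ) (hp : p.Prime)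
    (hh : 2 < h) (a b : R) (f g : PowerSeries R)
    (hf : ∀ k < p ^ (h + 1), PowerSeries.coeff (R := R) k f =
      PowerSeries.coeff (R := R) k (X + C (R := R) a * X ^ p ^ (h - 1) + C (R := R) b * X ^ p ^ h))
    (hg0 : constantCoeff (R := R) g = 0)
    (hgf : psComp g f = X) (hfg : psComp f g = X) :
    ∀ k ≤ p ^ h, PowerSeries.coeff (R := R) k g =
      PowerSeries.coeff (R := R) k
        (X + (∑ j ∈ Finset.range p,
            C (R := R) (algebraMap ℚ R ((-1 : ℚ) ^ (j + 1) / (j + 1) *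
                ((p ^ (h - 1) * (j + 1)).choose j : ℚ)) * a ^ (j + 1)) *
              X ^ (j * (p ^ (h - 1) - 1) + p ^ (h - 1)))
          - C (R := R) b * X ^ p ^ h) :=
  stmt_5_general p h hp hh a b f g hf hg0 hgf
end

section
/- Let p be a prime, h ≥ 1, and let A, B ∈ R[[x]] be power series over a commutative ring R of characteristic p, where x^a exactly divides A and x^b exactly divides B with a ≤ b. Then for any n ≥ 1, x^{(a(p^n - 1) + b)} divides the polynomial expression ((A+B)^{p^n} - A^{p^n} - B^{p^n}) computed as the reduction of the integral polynomial C_{p^n} evaluated at (A,B). -/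
/-!
Every middle binomial coefficient of `(x + y)^(p^n)` is divisible by `p`, so the integral
polynomial `C_{p^n}` is `∑_{0<k<p^n} (binom(p^n, k) / p) x^k y^(p^n-k)`. Each of its monomials
has degree at least one in both variables, and since `a ≤ b` the monomial of lowest `x`-adic
order after substituting `(A, B)` is `A^(p^n-1) B`.
-/

open MvPolynomial PowerSeries

open Finset in
/-- For `N = p ^ n` the divisions are exact and this is the paper's `C_{p^n}(x, y)`. -/
def binomialCarry {S : Type*} [CommRing S] (p N : ℕ) (x y : S) : S :=
  ∑ k ∈ Ioo 0 N, ((N.choose k / p : ℕ) : S) * x ^ k * y ^ (N - k)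

section BinomialCarry

variable {S T : Type*} [CommRing S] [CommRing T]

theorem add_pow_sub_pow_sub_pow_eq_mul_binomialCarry {p : ℕ} (hp : p.Prime) (n : ℕ) (x y : S) :
    (x + y) ^ p ^ n - x ^ p ^ n - y ^ p ^ n = p * binomialCarry p (p ^ n) x y := by
  set N := p ^ n
  have hN : 0 < N := pow_pos hp.pos n
  have hrange : Finset.range (N + 1) = insert 0 (insert N (Finset.Ioo 0 N)) := by
    ext k; simp only [Finset.mem_range, Finset.mem_insert, Finset.mem_Ioo]; omega
  rw [add_pow, hrange, Finset.sum_insert (by simp only [Finset.mem_insert, Finset.mem_Ioo]; omega),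
    Finset.sum_insert (by simp), binomialCarry, Finset.mul_sum]
  have middle : ∀ k ∈ Finset.Ioo 0 N, x ^ k * y ^ (N - k) * (N.choose k : S) =
      p * (((N.choose k / p : ℕ) : S) * x ^ k * y ^ (N - k)) := by
    intro k hk
    obtain ⟨hk0, hkN⟩ := Finset.mem_Ioo.mp hk
    obtain ⟨c, hc⟩ := hp.dvd_choose_pow hk0.ne' hkN.ne
    rw [hc, Nat.mul_div_cancel_left c hp.pos]
    push_cast
    ring
  rw [Finset.sum_congr rfl middle]
  simp only [pow_zero, tsub_zero, one_mul, Nat.choose_zero_right, Nat.cast_one, mul_one,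
    tsub_self, Nat.choose_self]
  ring

theorem map_binomialCarry {F : Type*} [FunLike F S T] [RingHomClass F S T] (f : F)
    (p N : ℕ) (x y : S) : f (binomialCarry p N x y) = binomialCarry p N (f x) (f y) := by
  simp [binomialCarry]

theorem pow_dvd_pow_mul_pow_of_lt {M : Type*} [CommMonoid M] {x A B : M} {a b k N : ℕ}
    (hA : x ^ a ∣ A) (hB : x ^ b ∣ B) (hab : a ≤ b) (hkN : k < N) :
    x ^ (a * (N - 1) + b) ∣ A ^ k * B ^ (N - k) := by
  obtain ⟨m, rfl⟩ : ∃ m, N = k + m + 1 := ⟨N - k - 1, by omega⟩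
  have hexp : a * (k + m + 1 - 1) + b ≤ a * k + b * (k + m + 1 - k) := by
    rw [show k + m + 1 - 1 = k + m by omega, show k + m + 1 - k = m + 1 by omega]
    nlinarith [Nat.mul_le_mul_right m hab]
  calc x ^ (a * (k + m + 1 - 1) + b) ∣ x ^ (a * k + b * (k + m + 1 - k)) := pow_dvd_pow _ hexp
    _ ∣ A ^ k * B ^ (k + m + 1 - k) := by
      rw [pow_add, pow_mul, pow_mul]
      exact mul_dvd_mul (pow_dvd_pow_of_dvd hA k) (pow_dvd_pow_of_dvd hB _)

theorem pow_dvd_binomialCarry {x A B : S} {a b : ℕ} (hA : x ^ a ∣ A) (hB : x ^ b ∣ B)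
    (hab : a ≤ b) (p N : ℕ) : x ^ (a * (N - 1) + b) ∣ binomialCarry p N A B :=
  Finset.dvd_sum fun k hk => by
    rw [mul_assoc]
    exact (pow_dvd_pow_mul_pow_of_lt hA hB hab (Finset.mem_Ioo.mp hk).2).mul_left _

end BinomialCarry

theorem stmt_9_general {R : Type*} [CommRing R] (p : ℕ) [Fact p.Prime]
    (n a b : ℕ) (A B : PowerSeries R)
    (Q : MvPolynomial (Fin 2) ℤ)
    (hQ : (p : ℤ) • Q =
      (MvPolynomial.X 0 + MvPolynomial.X 1) ^ p ^ n
        - (MvPolynomial.X 0 : MvPolynomial (Fin 2) ℤ) ^ p ^ n - MvPolynomial.X 1 ^ p ^ n)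
    (hA : (PowerSeries.X : PowerSeries R) ^ a ∣ A)
    (hB : (PowerSeries.X : PowerSeries R) ^ b ∣ B)
    (hab : a ≤ b) :
    (PowerSeries.X : PowerSeries R) ^ (a * (p ^ n - 1) + b) ∣
      MvPolynomial.aeval ![A, B] Q := by
  have hp : p.Prime := Fact.out
  have hQ_eq : Q = binomialCarry p (p ^ n) (MvPolynomial.X 0) (MvPolynomial.X 1) := by
    refine smul_right_injective _ (Int.natCast_ne_zero.mpr hp.ne_zero) ?_
    simp only [hQ, add_pow_sub_pow_sub_pow_eq_mul_binomialCarry hp, zsmul_eq_mul, Int.cast_natCast]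
  rw [hQ_eq, map_binomialCarry]
  simpa using pow_dvd_binomialCarry hA hB hab p (p ^ n)

/-- Let `R` be a commutative ring of characteristic `p`, and `A, B ∈ R[[x]]` with
`x^a` exactly dividing `A` and `x^b` exactly dividing `B`, `a ≤ b`. Then
`x^{a(p^n - 1) + b}` divides `C_{p^n}(A,B)`, where `C_{p^n}` is the integral polynomial
with `p • C_{p^n} = (x+y)^{p^n} - x^{p^n} - y^{p^n}` evaluated at `(A, B)` (coefficients
reduced mod `p` via the `ℤ`-algebra structure of `R`). -/
theorem stmt_9 {R : Type*} [CommRing R] (p : ℕ) [Fact p.Prime] [CharP R p]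
    (n a b : ℕ) (hn : 1 ≤ n) (A B : PowerSeries R)
    (Q : MvPolynomial (Fin 2) ℤ)
    (hQ : (p : ℤ) • Q =
      (MvPolynomial.X 0 + MvPolynomial.X 1) ^ p ^ n
        - (MvPolynomial.X 0 : MvPolynomial (Fin 2) ℤ) ^ p ^ n - MvPolynomial.X 1 ^ p ^ n)
    (hA : (PowerSeries.X : PowerSeries R) ^ a ∣ A)
    (hA' : ¬ (PowerSeries.X : PowerSeries R) ^ (a + 1) ∣ A)
    (hB : (PowerSeries.X : PowerSeries R) ^ b ∣ B)
    (hB' : ¬ (PowerSeries.X : PowerSeries R) ^ (b + 1) ∣ B)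
    (hab : a ≤ b) :
    (PowerSeries.X : PowerSeries R) ^ (a * (p ^ n - 1) + b) ∣
      MvPolynomial.aeval ![A, B] Q :=
  stmt_9_general p n a b A B Q hQ hA hB hab
end

section
/- Over a ℚ-algebra, if log(x) = Σ_{i≥0} L_i x^{p^i} with L_0 = 1 satisfies the Araki-type relations p·L_n = Σ_{0 ≤ i ≤ n} L_i v_{n-i}^{p^i} with v_0 = p, v_i = 0 for 1 ≤ i ≤ h-2, v_{h-1} = u, v_h = 1, and v_i = 0 for i > h, then L_i = 0 for 1 ≤ i ≤ h-2, L_{h-1} = u/(p - p^{p^{h-1}}), and L_h = 1/(p - p^{p^h}). -/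
/-!
Isolating the `i = n` term of the relation for `p · L n` gives
`(p - p^{p^n}) L n = ∑_{i<n} L i v_{n-i}^{p^i}`, and `p - p^{p^n} ≠ 0` for `n ≥ 1`. For
`1 ≤ n ≤ h - 2` every `v_{n-i}` on the right vanishes. For `n = h - 1` and `n = h` the terms
with `1 ≤ i ≤ h - 2` then vanish because `L i` does, the term `i = h - 1` of `n = h` because
`v_1 = 0`, so only `L_0 v_n = v_n` survives.
-/

theorem natCast_sub_pow_pow_ne_zero {R : Type*} [Ring R] [CharZero R] {p n : ℕ} (hp : 1 < p)
    (hn : n ≠ 0) : (p : R) - (p : R) ^ p ^ n ≠ 0 := by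
  have hlt : p ^ 1 < p ^ p ^ n := Nat.pow_lt_pow_right hp (Nat.one_lt_pow hn hp)
  rw [pow_one] at hlt
  exact sub_ne_zero.mpr (by exact_mod_cast hlt.ne)

namespace ArakiLog

variable {K : Type*} {p : ℕ} {v L : ℕ → K}

theorem sub_mul_eq_sum [CommRing K] (hv0 : v 0 = p)
    (hrec : ∀ n : ℕ, (p : K) * L n = ∑ i ∈ Finset.range (n + 1), L i * v (n - i) ^ p ^ i)
    (n : ℕ) :
    ((p : K) - (p : K) ^ p ^ n) * L n = ∑ i ∈ Finset.range n, L i * v (n - i) ^ p ^ i := by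
  have h := hrec n
  rw [Finset.sum_range_succ, Nat.sub_self, hv0] at h
  linear_combination h

theorem eq_div_of_middle_terms_eq_zero [Field K] [CharZero K] (hp : 1 < p) (hv0 : v 0 = p)
    (hrec : ∀ n : ℕ, (p : K) * L n = ∑ i ∈ Finset.range (n + 1), L i * v (n - i) ^ p ^ i)
    (n : ℕ) (hn : n ≠ 0) (hmid : ∀ i, 0 < i → i < n → L i * v (n - i) ^ p ^ i = 0) :
    L n = L 0 * v n / ((p : K) - (p : K) ^ p ^ n) := by
  have hsum : ∑ i ∈ Finset.range n, L i * v (n - i) ^ p ^ i = L 0 * v n := by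
    rw [Finset.sum_eq_single 0
      (fun i hi hi0 => hmid i (Nat.pos_of_ne_zero hi0) (Finset.mem_range.mp hi))
      (fun h0 => absurd (Finset.mem_range.mpr (Nat.pos_of_ne_zero hn)) h0)]
    simp
  rw [eq_div_iff (natCast_sub_pow_pow_ne_zero hp hn), ← hsum, ← sub_mul_eq_sum hv0 hrec,
    mul_comm]

end ArakiLog

theorem stmt_10_general (p h : ℕ) (hp : p.Prime) (hh : 2 < h)
    (v L : ℕ → RatFunc ℚ)
    (hv0 : v 0 = (p : RatFunc ℚ))
    (hvmid : ∀ i, 1 ≤ i → i ≤ h - 2 → v i = 0)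
    (hvh1 : v (h - 1) = RatFunc.X)
    (hvh : v h = 1)
    (hL0 : L 0 = 1)
    (hrec : ∀ n : ℕ, (p : RatFunc ℚ) * L n =
      ∑ i ∈ Finset.range (n + 1), L i * (v (n - i)) ^ p ^ i) :
    (∀ i, 1 ≤ i → i ≤ h - 2 → L i = 0) ∧
    L (h - 1) = RatFunc.X / ((p : RatFunc ℚ) - (p : RatFunc ℚ) ^ p ^ (h - 1)) ∧
    L h = 1 / ((p : RatFunc ℚ) - (p : RatFunc ℚ) ^ p ^ h) := by
  have hp0 : ∀ i, p ^ i ≠ 0 := fun i => pow_ne_zero i hp.ne_zero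
  have solve := ArakiLog.eq_div_of_middle_terms_eq_zero hp.one_lt hv0 hrec
  have hz : ∀ n, 1 ≤ n → n ≤ h - 2 → L n = 0 := fun n hn1 hn2 => by
    rw [solve n (by omega) fun i _ hi => by
      rw [hvmid (n - i) (by omega) (by omega), zero_pow (hp0 i), mul_zero]]
    rw [hvmid n hn1 hn2, mul_zero, zero_div]
  refine ⟨hz, ?_, ?_⟩
  · rw [solve (h - 1) (by omega) fun i hi0 hi => by rw [hz i hi0 (by omega), zero_mul]]
    rw [hL0, hvh1, one_mul]
  · rw [solve h (by omega) fun i hi0 hi => ?_, hL0, hvh, one_mul]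
    rcases Nat.lt_or_ge i (h - 1) with hlow | hlast
    · rw [hz i hi0 (by omega), zero_mul]
    · rw [show h - i = 1 by omega, hvmid 1 le_rfl (by omega), zero_pow (hp0 i), mul_zero]

/-- Over `ℚ(u)`, if `log(x) = Σ_{i≥0} L_i x^{p^i}` with `L_0 = 1` satisfies the Araki
relations `p·L_n = Σ_{0≤i≤n} L_i v_{n-i}^{p^i}` with `v_0 = p`, `v_i = 0` for
`1 ≤ i ≤ h-2`, `v_{h-1} = u`, `v_h = 1` and `v_i = 0` for `i > h`, then `L_i = 0` for
`1 ≤ i ≤ h-2`, `L_{h-1} = u/(p - p^{p^{h-1}})` and `L_h = 1/(p - p^{p^h})`. -/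
theorem stmt_10 (p h : ℕ) (hp : p.Prime) (hh : 2 < h)
    (v L : ℕ → RatFunc ℚ)
    (hv0 : v 0 = (p : RatFunc ℚ))
    (hvmid : ∀ i, 1 ≤ i → i ≤ h - 2 → v i = 0)
    (hvh1 : v (h - 1) = RatFunc.X)
    (hvh : v h = 1)
    (hvtop : ∀ i, h < i → v i = 0)
    (hL0 : L 0 = 1)
    (hrec : ∀ n : ℕ, (p : RatFunc ℚ) * L n =
      ∑ i ∈ Finset.range (n + 1), L i * (v (n - i)) ^ p ^ i) :
    (∀ i, 1 ≤ i → i ≤ h - 2 → L i = 0) ∧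
    L (h - 1) = RatFunc.X / ((p : RatFunc ℚ) - (p : RatFunc ℚ) ^ p ^ (h - 1)) ∧
    L h = 1 / ((p : RatFunc ℚ) - (p : RatFunc ℚ) ^ p ^ h) :=
  stmt_10_general p h hp hh v L hv0 hvmid hvh1 hvh hL0 hrec
end
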